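/- arXiv:2211.08696 — 2 statements merged into one kernel-verified Lean document; each statement's English description precedes it below -/
import Mathlib

section
/- Let χ be a primitive Dirichlet character modulo q with χ(-1) = 1, and let f : [0,1] → ℝ be a continuous function whose Fourier series converges to f pointwise. Then ∑_{k=1}^{q-1} χ(k) f(k/q) = 2τ(χ) ∑_{n=1}^{∞} conj(χ)(n) ∫_0^1 f(t) cos(2πnt) dt. -/
/-!
Weight the Fourier expansion of `f` at the points `k / q` by `χ k` and sum over `k`. For each
frequency `n` the resulting exponential sum `∑ₖ χ k e(nk/q)` is the Gauss sum of `χ` twisted by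
`n`, which for primitive `χ` equals `conj (χ n) τ(χ)` (also when `gcd(n, q) > 1`). Since `χ` is
even, the frequencies `n` and `-n` carry the same weight, so their Fourier coefficients combine
to `2 ∫ f(t) cos(2πnt) dt`, and the frequency `0` drops out because `χ 0 = 0`.
-/

open Complex Finset
open scoped Real

namespace ZMod

variable {q : ℕ} [NeZero q] {M : Type*} [AddCommMonoid M]

lemma sum_eq_sum_range (F : ZMod q → M) : ∑ x, F x = ∑ k ∈ range q, F k :=
  Finset.sum_nbij' val (↑) (fun x _ => mem_range.mpr x.val_lt) (fun _ _ => mem_univ _)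
    (fun x _ => natCast_zmod_val x) (fun _ hk => val_cast_of_lt (mem_range.mp hk))
    (fun x _ => by rw [natCast_zmod_val])

lemma sum_eq_sum_Icc_of_map_zero (F : ZMod q → M) (h0 : F 0 = 0) :
    ∑ x, F x = ∑ k ∈ Icc 1 (q - 1), F k := by
  rw [sum_eq_sum_range]
  refine (sum_subset (fun k hk => ?_) (fun k hk hk' => ?_)).symm
  · have := NeZero.pos q
    simp only [mem_Icc, mem_range] at hk ⊢
    omega
  · obtain rfl : k = 0 := by simp only [mem_Icc, mem_range] at hk hk'; omega
    simpa using h0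

lemma stdAddChar_intCast_mul_natCast (n : ℤ) (k : ℕ) :
    stdAddChar ((n : ZMod q) * (k : ZMod q)) = exp (2 * π * I * n * k / q) := by
  rw [show (n : ZMod q) * (k : ZMod q) = ((n * k : ℤ) : ZMod q) by push_cast; rfl, stdAddChar_coe]
  push_cast
  ring_nf

end ZMod

namespace DirichletCharacter

variable {q : ℕ} [Fact (1 < q)] {χ : DirichletCharacter ℂ q}

lemma sum_Icc_mul_exp_eq_inv_mul_gaussSum (hχ : χ.IsPrimitive) (n : ℤ) :
    ∑ k ∈ Icc 1 (q - 1), χ k * exp (2 * π * I * n * k / q) =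
      χ⁻¹ n * gaussSum χ ZMod.stdAddChar := by
  rw [← gaussSum_mulShift_of_isPrimitive _ hχ, gaussSum,
    ZMod.sum_eq_sum_Icc_of_map_zero _ (by simp [χ.map_nonunit not_isUnit_zero])]
  simp only [AddChar.mulShift_apply, ZMod.stdAddChar_intCast_mul_natCast]

lemma hasSum_gaussSum_mul_inv_mul_of_isPrimitive (hχ : χ.IsPrimitive) {c : ℤ → ℂ} {g : ℝ → ℂ}
    (hg : ∀ k ∈ Icc 1 (q - 1),
      HasSum (fun n : ℤ => c n * exp (2 * π * I * n * ((k / q : ℝ) : ℂ))) (g (k / q))) :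
    HasSum (fun n : ℤ => gaussSum χ ZMod.stdAddChar * χ⁻¹ n * c n)
      (∑ k ∈ Icc 1 (q - 1), χ k * g (k / q)) := by
  refine (hasSum_sum fun k hk => (hg k hk).mul_left (χ k)).congr_fun fun n => ?_
  rw [mul_comm _ (χ⁻¹ _), ← sum_Icc_mul_exp_eq_inv_mul_gaussSum hχ, sum_mul]
  refine sum_congr rfl fun k _ => ?_
  push_cast
  ring_nf

end DirichletCharacter

lemma intervalIntegral_mul_exp_neg_add_mul_exp {f : ℝ → ℝ} {a b : ℝ}
    (hf : IntervalIntegrable f MeasureTheory.volume a b) (x : ℝ) :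
    (∫ t in a..b, (f t : ℂ) * exp (-(x * t * I))) + ∫ t in a..b, (f t : ℂ) * exp (x * t * I) =
      2 * ((∫ t in a..b, f t * Real.cos (x * t) : ℝ) : ℂ) := by
  have hfC : IntervalIntegrable (fun t => (f t : ℂ)) MeasureTheory.volume a b :=
    ⟨hf.1.ofReal, hf.2.ofReal⟩
  rw [← intervalIntegral.integral_add (hfC.mul_continuousOn (by fun_prop))
    (hfC.mul_continuousOn (by fun_prop)), ← intervalIntegral.integral_ofReal,
    ← intervalIntegral.integral_const_mul]
  refine intervalIntegral.integral_congr fun t _ => ?_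
  push_cast
  rw [← mul_add, mul_left_comm, two_cos, neg_mul, add_comm]

theorem char_sum_formula_even (q : ℕ) (hq : 2 ≤ q) (χ : DirichletCharacter ℂ q)
    (hχ : χ.IsPrimitive) (heven : χ (-1) = 1) (f : ℝ → ℝ)
    (hf : ContinuousOn f (Set.Icc 0 1))
    (hFourier : ∀ x ∈ Set.Icc (0:ℝ) 1,
      HasSum (fun n : ℤ =>
        (∫ t in (0:ℝ)..1, (f t : ℂ) * Complex.exp (-(2 * Real.pi * Complex.I * n * t))) *
          Complex.exp (2 * Real.pi * Complex.I * n * x)) (f x)) :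
    ∑ k ∈ Finset.Icc 1 (q - 1), χ (k : ZMod q) * ((f (k / q) : ℂ)) =
      2 * (∑ k ∈ Finset.Icc 1 (q - 1), χ (k : ZMod q) *
          Complex.exp (2 * Real.pi * Complex.I * k / q)) *
        ∑' n : ℕ+, (starRingEnd ℂ) (χ ((n : ℕ) : ZMod q)) *
          ((∫ t in (0:ℝ)..1, f t * Real.cos (2 * Real.pi * n * t) : ℝ) : ℂ) := by
  have : Fact (1 < q) := ⟨hq⟩
  set τ := gaussSum χ ZMod.stdAddChar
  set c : ℤ → ℂ := fun n => ∫ t in (0:ℝ)..1, (f t : ℂ) * exp (-(2 * π * I * n * t))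
  have hτ : ∑ k ∈ Icc 1 (q - 1), χ k * exp (2 * π * I * k / q) = τ := by
    simpa using χ.sum_Icc_mul_exp_eq_inv_mul_gaussSum hχ 1
  have hℤ : HasSum (fun n : ℤ => τ * χ⁻¹ n * c n) (∑ k ∈ Icc 1 (q - 1), χ k * (f (k / q) : ℂ)) :=
    χ.hasSum_gaussSum_mul_inv_mul_of_isPrimitive hχ (g := fun x => (f x : ℂ)) fun k hk => hFourier _
      (unitInterval.div_mem k.cast_nonneg q.cast_nonneg
        (by exact_mod_cast (mem_Icc.mp hk).2.trans (Nat.sub_le q 1)))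
  have hcos (n : ℕ) : c n + c (-n) =
      2 * ((∫ t in (0:ℝ)..1, f t * Real.cos (2 * π * n * t) : ℝ) : ℂ) := by
    convert intervalIntegral_mul_exp_neg_add_mul_exp
      (hf.intervalIntegrable_of_Icc zero_le_one) (2 * π * n) using 4 <;> push_cast <;> ring_nf
  have hℕ : HasSum (fun n : ℕ => 2 * τ * (starRingEnd ℂ (χ n) *
      ((∫ t in (0:ℝ)..1, f t * Real.cos (2 * π * n * t) : ℝ) : ℂ)))
      (∑ k ∈ Icc 1 (q - 1), χ k * (f (k / q) : ℂ)) := by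
    have h := hℤ.nat_add_neg
    simp only [Int.cast_natCast, Int.cast_neg, Int.cast_zero, MulChar.map_zero, mul_zero,
      zero_mul, add_zero] at h
    refine h.congr_fun fun n => ?_
    rw [← MulChar.star_apply', ← MulChar.star_apply', DirichletCharacter.Even.eval_neg χ _ heven,
      Complex.star_def]
    linear_combination -(τ * starRingEnd ℂ (χ n)) * hcos n
  rw [hτ, ← tsum_mul_left]
  exact ((tsum_pnat_eq_tsum_of_eq_zero (by simp [MulChar.map_zero χ])).trans hℕ.tsum_eq).symm
end

section
/- Let χ be a primitive Dirichlet character modulo q with χ(-1) = -1, and let f : [0,1] → ℝ be a continuous function whose Fourier series converges to f pointwise. Then ∑_{k=1}^{q-1} χ(k) f(k/q) = -2i τ(χ) ∑_{n=1}^{∞} conj(χ)(n) ∫_0^1 f(t) sin(2πnt) dt. -/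
/-!
Evaluate the Fourier series of `f` at the points `k / q` and sum against `χ k`. The inner sums
`∑ k, χ k * exp (2πi n k / q)` are Gauss sums of shifted characters, equal to `conj (χ n) * τ(χ)`
because `χ` is primitive. Pairing the terms `n` and `-n`, oddness of `χ` turns the difference
`c n - c (-n)` of Fourier coefficients into `-2i ∫ f(t) sin(2πnt) dt`.
-/

open Complex Finset MeasureTheory

lemma ZMod.sum_Icc_one_sub_one_eq_sum {M : Type*} [AddCommMonoid M] {q : ℕ} [NeZero q]
    (H : ZMod q → M) (h0 : H 0 = 0) :
    ∑ k ∈ Icc 1 (q - 1), H k = ∑ x : ZMod q, H x := by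
  have hrange : ∑ k ∈ range q, H k = ∑ x : ZMod q, H x :=
    sum_nbij' (↑) ZMod.val (fun _ _ ↦ mem_univ _) (fun x _ ↦ mem_range.mpr x.val_lt)
      (fun _ hk ↦ ZMod.val_cast_of_lt (mem_range.mp hk)) (fun x _ ↦ ZMod.natCast_zmod_val x)
      (fun _ _ ↦ rfl)
  have hsplit : range q = insert 0 (Icc 1 (q - 1)) := by
    ext k
    simp only [mem_range, mem_insert, mem_Icc]
    have := NeZero.pos q
    omega
  rw [← hrange, hsplit, sum_insert (by simp), Nat.cast_zero, h0, zero_add]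

lemma DirichletCharacter.IsPrimitive.sum_mul_addChar_mul_eq_conj_mul_gaussSum {q : ℕ} [NeZero q]
    {χ : DirichletCharacter ℂ q} (hχ : χ.IsPrimitive) (ψ : AddChar (ZMod q) ℂ) (a : ZMod q) :
    ∑ x, χ x * ψ (a * x) = starRingEnd ℂ (χ a) * gaussSum χ ψ := by
  rw [starRingEnd_apply, MulChar.star_apply', ← gaussSum_mulShift_of_isPrimitive ψ hχ a]
  rfl

lemma DirichletCharacter.sum_Icc_mul_exp_eq_gaussSum {q : ℕ} [NeZero q] [Nontrivial (ZMod q)]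
    (χ : DirichletCharacter ℂ q) :
    ∑ k ∈ Icc 1 (q - 1), χ k * exp (2 * Real.pi * I * k / q) = gaussSum χ ZMod.stdAddChar := by
  have hexp (k : ℕ) : exp (2 * Real.pi * I * k / q) = ZMod.stdAddChar (k : ZMod q) := by
    simpa using (ZMod.stdAddChar_coe (N := q) k).symm
  simp_rw [hexp]
  exact ZMod.sum_Icc_one_sub_one_eq_sum (fun x ↦ χ x * ZMod.stdAddChar x)
    (by rw [MulChar.map_zero, zero_mul])

lemma DirichletCharacter.IsPrimitive.sum_Icc_mul_exp_eq_conj_mul_gaussSum {q : ℕ} [NeZero q]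
    [Nontrivial (ZMod q)] {χ : DirichletCharacter ℂ q} (hχ : χ.IsPrimitive) (n : ℤ) :
    ∑ k ∈ Icc 1 (q - 1), χ k * exp (2 * Real.pi * I * n * ((k / q : ℝ) : ℂ)) =
      starRingEnd ℂ (χ n) * gaussSum χ ZMod.stdAddChar := by
  have hexp (k : ℕ) : exp (2 * Real.pi * I * n * ((k / q : ℝ) : ℂ)) =
      ZMod.stdAddChar ((n : ZMod q) * (k : ZMod q)) := by
    have := ZMod.stdAddChar_coe (N := q) (n * k)
    push_cast at this
    rw [this]
    congr 1
    push_cast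
    ring
  simp_rw [hexp]
  rw [ZMod.sum_Icc_one_sub_one_eq_sum (fun x ↦ χ x * ZMod.stdAddChar ((n : ZMod q) * x))
    (by rw [MulChar.map_zero, zero_mul])]
  exact hχ.sum_mul_addChar_mul_eq_conj_mul_gaussSum _ _

lemma integral_mul_exp_neg_sub_integral_mul_exp {a b : ℝ} {f : ℝ → ℝ}
    (hf : IntervalIntegrable f volume a b) (x : ℝ) :
    (∫ t in a..b, (f t : ℂ) * exp (-(2 * Real.pi * I * x * t))) -
        ∫ t in a..b, (f t : ℂ) * exp (2 * Real.pi * I * x * t) =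
      -2 * I * ((∫ t in a..b, f t * Real.sin (2 * Real.pi * x * t) : ℝ) : ℂ) := by
  have hfC : IntervalIntegrable (fun t ↦ (f t : ℂ)) volume a b :=
    ⟨hf.1.ofReal, hf.2.ofReal⟩
  rw [← intervalIntegral.integral_sub (hfC.mul_continuousOn (by fun_prop))
    (hfC.mul_continuousOn (by fun_prop)), ← intervalIntegral.integral_ofReal,
    ← intervalIntegral.integral_const_mul]
  congr 1 with t
  set θ : ℂ := 2 * Real.pi * x * t
  have h₁ : -(2 * Real.pi * I * x * t) = -θ * I := by ring
  have h₂ : 2 * Real.pi * I * x * t = θ * I := by ring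
  rw [h₁, h₂, exp_mul_I, exp_mul_I, cos_neg, sin_neg]
  push_cast
  ring

lemma HasSum.pnat_add_neg {M : Type*} [AddCommGroup M] [TopologicalSpace M]
    [IsTopologicalAddGroup M] {f : ℤ → M} {a : M} (hf : HasSum f a) (h0 : f 0 = 0) :
    HasSum (fun n : ℕ+ ↦ f n + f (-n)) a := by
  refine hasSum_pnat_iff (f := fun n : ℕ ↦ f n + f (-n)) |>.mpr ?_
  simpa [h0] using hf.nat_add_neg

lemma DirichletCharacter.IsPrimitive.hasSum_sum_Icc_mul {q : ℕ} [NeZero q] [Nontrivial (ZMod q)]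
    {χ : DirichletCharacter ℂ q} (hχ : χ.IsPrimitive) {F : ℝ → ℂ} (c : ℤ → ℂ)
    (hF : ∀ k ∈ Icc 1 (q - 1),
      HasSum (fun n : ℤ ↦ c n * exp (2 * Real.pi * I * n * ((k / q : ℝ) : ℂ))) (F (k / q))) :
    HasSum (fun n : ℤ ↦ starRingEnd ℂ (χ n) * gaussSum χ ZMod.stdAddChar * c n)
      (∑ k ∈ Icc 1 (q - 1), χ k * F (k / q)) := by
  refine (hasSum_sum fun k hk ↦ (hF k hk).mul_left (χ k)).congr_fun fun n ↦ ?_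
  rw [← hχ.sum_Icc_mul_exp_eq_conj_mul_gaussSum, sum_mul]
  exact sum_congr rfl fun k _ ↦ by ring

theorem char_sum_formula_odd_general (q : ℕ) (χ : DirichletCharacter ℂ q)
    (hχ : χ.IsPrimitive) (hodd : χ (-1) = -1) (f : ℝ → ℝ)
    (hf : ContinuousOn f (Set.Icc 0 1))
    (hFourier : ∀ x ∈ Set.Icc (0:ℝ) 1,
      HasSum (fun n : ℤ =>
        (∫ t in (0:ℝ)..1, (f t : ℂ) * Complex.exp (-(2 * Real.pi * Complex.I * n * t))) *
          Complex.exp (2 * Real.pi * Complex.I * n * x)) (f x)) :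
    ∑ k ∈ Finset.Icc 1 (q - 1), χ (k : ZMod q) * ((f (k / q) : ℂ)) =
      -2 * Complex.I *
        (∑ k ∈ Finset.Icc 1 (q - 1), χ (k : ZMod q) *
          Complex.exp (2 * Real.pi * Complex.I * k / q)) *
        ∑' n : ℕ+, (starRingEnd ℂ) (χ ((n : ℕ) : ZMod q)) *
          ((∫ t in (0:ℝ)..1, f t * Real.sin (2 * Real.pi * n * t) : ℝ) : ℂ) := by
  obtain rfl | hq₀ := Nat.eq_zero_or_pos q
  · simp
  have : Fact (1 < q) := ⟨by
    by_contra! h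
    obtain rfl : q = 1 := by omega
    rw [Subsingleton.elim (-1 : ZMod 1) 1, map_one] at hodd
    norm_num at hodd⟩
  have hk_mem (k : ℕ) (hk : k ∈ Icc 1 (q - 1)) : (k / q : ℝ) ∈ Set.Icc 0 1 :=
    ⟨by positivity, div_le_one_of_le₀ (by norm_cast; grind) (by positivity)⟩
  have hS := hχ.hasSum_sum_Icc_mul (F := fun x ↦ (f x : ℂ)) _ fun k hk ↦ hFourier _ (hk_mem k hk)
  have hfi : IntervalIntegrable f volume 0 1 :=
    (hf.mono (by simp)).intervalIntegrable
  rw [χ.sum_Icc_mul_exp_eq_gaussSum, ← tsum_mul_left]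
  refine ((hS.pnat_add_neg (by simp [MulChar.map_zero])).congr_fun fun n ↦ ?_).tsum_eq.symm
  have hsin := integral_mul_exp_neg_sub_integral_mul_exp hfi (n : ℝ)
  have hχneg (x : ZMod q) : χ (-x) = -χ x := DirichletCharacter.Odd.eval_neg χ x hodd
  simp only [ofReal_natCast] at hsin
  simp only [Int.cast_neg, Int.cast_natCast, hχneg, map_neg, mul_neg, neg_mul, neg_neg]
  linear_combination -(starRingEnd ℂ (χ n) * gaussSum χ ZMod.stdAddChar) * hsin

theorem char_sum_formula_odd (q : ℕ) (hq : 2 ≤ q) (χ : DirichletCharacter ℂ q)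
    (hχ : χ.IsPrimitive) (hodd : χ (-1) = -1) (f : ℝ → ℝ)
    (hf : ContinuousOn f (Set.Icc 0 1))
    (hFourier : ∀ x ∈ Set.Icc (0:ℝ) 1,
      HasSum (fun n : ℤ =>
        (∫ t in (0:ℝ)..1, (f t : ℂ) * Complex.exp (-(2 * Real.pi * Complex.I * n * t))) *
          Complex.exp (2 * Real.pi * Complex.I * n * x)) (f x)) :
    ∑ k ∈ Finset.Icc 1 (q - 1), χ (k : ZMod q) * ((f (k / q) : ℂ)) =
      -2 * Complex.I *
        (∑ k ∈ Finset.Icc 1 (q - 1), χ (k : ZMod q) *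
          Complex.exp (2 * Real.pi * Complex.I * k / q)) *
        ∑' n : ℕ+, (starRingEnd ℂ) (χ ((n : ℕ) : ZMod q)) *
          ((∫ t in (0:ℝ)..1, f t * Real.sin (2 * Real.pi * n * t) : ℝ) : ℂ) :=
  char_sum_formula_odd_general q χ hχ hodd f hf hFourier
end
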